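/- arXiv:2511.04380 — 2 statements merged into one kernel-verified Lean document; each statement's English description precedes it below -/
import Mathlib

section
/- For any real symmetric matrices A and B of the same size, and any integers p ≥ 1 and 0 ≤ ℓ ≤ 2p-2, one has trace(A B^{2p-2-ℓ} A B^ℓ) ≤ trace(A² B^{2p-2}). -/
/-!
Diagonalise `B = U diag(d) Uᵀ` and put `C = Uᵀ A U`, again symmetric. Then
`trace (A B^k A B^l) = ∑ i j, C i j ^ 2 * d j ^ k * d i ^ l`, and `A² B^(k+l)` is the case `k = 0`.
Averaging the sum with its `(i, j)`-transpose reduces the inequality to the two-term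
rearrangement inequality `x^k y^l + x^l y^k ≤ x^(k+l) + y^(k+l)`, which holds because for
`k ≡ l (mod 2)` the functions `x ↦ x^k` and `x ↦ x^l` monovary.
-/

open Matrix

lemma monovary_pow_pow {R : Type*} [Ring R] [LinearOrder R] [IsStrictOrderedRing R] {k l : ℕ}
    (h : Even (k + l)) :
    Monovary (fun x : R => x ^ k) (fun x : R => x ^ l) := by
  intro x y hxy
  rcases Nat.even_or_odd l with hl | hl
  · have hk : Even k := (Nat.even_add.mp h).mpr hl
    simp only [← hk.pow_abs x, ← hk.pow_abs y]
    simp only [← hl.pow_abs x, ← hl.pow_abs y] at hxy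
    exact pow_le_pow_left₀ (abs_nonneg x) (lt_of_pow_lt_pow_left₀ l (abs_nonneg y) hxy).le k
  · have hk : Odd k := by
      rw [← Nat.not_even_iff_odd] at hl ⊢
      exact fun hk => hl ((Nat.even_add.mp h).mp hk)
    exact hk.pow_le_pow.mpr (hl.pow_lt_pow.mp hxy).le

lemma sum_sum_mul_pow_mul_pow_le {R ι : Type*} [CommRing R] [LinearOrder R]
    [IsStrictOrderedRing R] [Fintype ι] {w : ι → ι → R} (hw : ∀ i j, 0 ≤ w i j)
    (hw_symm : ∀ i j, w j i = w i j) (d : ι → R) {k l : ℕ} (h : Even (k + l)) :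
    ∑ i, ∑ j, w i j * (d j ^ k * d i ^ l) ≤ ∑ i, ∑ j, w i j * d i ^ (k + l) := by
  have swap : ∀ f : ι → ι → R, ∑ i, ∑ j, w i j * f j i = ∑ i, ∑ j, w i j * f i j := fun f => by
    rw [Finset.sum_comm]
    simp only [hw_symm]
  have pointwise : ∀ i j, w i j * (d j ^ k * d i ^ l) + w i j * (d i ^ k * d j ^ l) ≤
      w i j * d i ^ (k + l) + w i j * d j ^ (k + l) := fun i j => by
    rw [← mul_add, ← mul_add, pow_add, pow_add]
    exact mul_le_mul_of_nonneg_left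
      ((monovary_pow_pow h).mul_add_mul_le_mul_add_mul (d j) (d i) |>.trans_eq (by ring)) (hw i j)
  have := Finset.sum_le_sum fun i (_ : i ∈ Finset.univ) =>
    Finset.sum_le_sum fun j (_ : j ∈ Finset.univ) => pointwise i j
  simp only [Finset.sum_add_distrib] at this
  rw [swap fun a b => d b ^ k * d a ^ l, swap fun a b => d a ^ (k + l)] at this
  linarith

namespace Matrix

lemma trace_mul_diagonal_mul_mul_diagonal {ι R : Type*} [Fintype ι] [DecidableEq ι]
    [CommSemiring R] (C : Matrix ι ι R) (x y : ι → R) :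
    (C * diagonal x * C * diagonal y).trace = ∑ i, ∑ j, C i j * C j i * (x j * y i) := by
  simp only [trace, diag_apply, mul_diagonal]
  refine Finset.sum_congr rfl fun i _ => ?_
  simp only [mul_apply (M := C * diagonal x), mul_diagonal, Finset.sum_mul]
  exact Finset.sum_congr rfl fun j _ => by ring

lemma trace_conjStarAlgAut {ι R : Type*} [Fintype ι] [DecidableEq ι] [CommSemiring R]
    [StarRing R] (u : unitary (Matrix ι ι R)) (M : Matrix ι ι R) :
    (Unitary.conjStarAlgAut R _ u M).trace = M.trace := by
  rw [Unitary.conjStarAlgAut_apply, trace_mul_cycle, Unitary.coe_star_mul_self, one_mul]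

lemma IsSymm.exists_trace_mul_pow_mul_mul_pow_eq_sum {ι : Type*} [Fintype ι] [DecidableEq ι]
    {A B : Matrix ι ι ℝ} (hA : A.IsSymm) (hB : B.IsSymm) :
    ∃ (w : ι → ι → ℝ) (d : ι → ℝ), (∀ i j, 0 ≤ w i j) ∧ (∀ i j, w j i = w i j) ∧
      ∀ a b : ℕ, (A * B ^ a * A * B ^ b).trace = ∑ i, ∑ j, w i j * (d j ^ a * d i ^ b) := by
  have hB' : B.IsHermitian := isHermitian_iff_isSymm.mpr hB
  set φ := Unitary.conjStarAlgAut ℝ _ (star hB'.eigenvectorUnitary)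
  set C := φ A
  have hC : C.IsSymm := by
    rw [← isHermitian_iff_isSymm, IsHermitian, ← star_eq_conjTranspose, ← map_star,
      star_eq_conjTranspose, isHermitian_iff_isSymm.mpr hA]
  refine ⟨fun i j => C i j * C j i, RCLike.ofReal ∘ hB'.eigenvalues,
    fun i j => by dsimp only; rw [hC.apply i j]; exact mul_self_nonneg _,
    fun i j => mul_comm _ _, fun a b => ?_⟩
  rw [← trace_conjStarAlgAut (star hB'.eigenvectorUnitary), map_mul, map_mul, map_mul, map_pow,
    map_pow, hB'.conjStarAlgAut_star_eigenvectorUnitary, diagonal_pow, diagonal_pow,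
    trace_mul_diagonal_mul_mul_diagonal]
  rfl

end Matrix

theorem stmt_0_general {n : ℕ} (A B : Matrix (Fin n) (Fin n) ℝ)
    (hA : A.IsSymm) (hB : B.IsSymm) (p : ℕ) (ℓ : ℕ) (hℓ : ℓ ≤ 2 * p - 2) :
    (A * B ^ (2 * p - 2 - ℓ) * A * B ^ ℓ).trace ≤ (A ^ 2 * B ^ (2 * p - 2)).trace := by
  obtain ⟨w, d, hw, hw_symm, htrace⟩ := hA.exists_trace_mul_pow_mul_mul_pow_eq_sum hB
  have hsq : A ^ 2 * B ^ (2 * p - 2) = A * B ^ 0 * A * B ^ (2 * p - 2) := by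
    rw [pow_zero, mul_one, sq]
  have heven : Even (2 * p - 2 - ℓ + ℓ) := by
    rw [Nat.sub_add_cancel hℓ, ← Nat.mul_sub_one]
    exact even_two_mul _
  rw [hsq, htrace, htrace]
  simpa only [pow_zero, one_mul, Nat.sub_add_cancel hℓ] using
    sum_sum_mul_pow_mul_pow_le hw hw_symm d heven

theorem stmt_0 {n : ℕ} (A B : Matrix (Fin n) (Fin n) ℝ)
    (hA : A.IsSymm) (hB : B.IsSymm) (p : ℕ) (hp : 1 ≤ p) (ℓ : ℕ) (hℓ : ℓ ≤ 2 * p - 2) :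
    (A * B ^ (2 * p - 2 - ℓ) * A * B ^ ℓ).trace ≤ (A ^ 2 * B ^ (2 * p - 2)).trace :=
  stmt_0_general A B hA hB p ℓ hℓ
end

section
/- Let H_0 and V be bounded self-adjoint operators, and define recursively T_0(t) = e^{-itH_0} and T_j(t) = ∫_0^t e^{-i(t-s)H_0} V T_{j-1}(s) ds. Then for all s, t ≥ 0 and all k ≥ 0, T_k(s+t) = ∑_{j=0}^k T_j(s) T_{k-j}(t). -/
/-!
Split the integral defining `T_{k+1}(s + t)` at `t`. On `[0, t]` the group law
`e^{-i(s+t-u)H₀} = e^{-isH₀} e^{-i(t-u)H₀}` turns it into `T₀(s) T_{k+1}(t)`; on `[t, s + t]` the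
substitution `u = r + t` and the induction hypothesis for `T_k(r + t)` turn it into
`∑_{j ≤ k} T_{j+1}(s) T_{k-j}(t)`.
-/

open MeasureTheory Finset

variable {H : Type*} [NormedAddCommGroup H] [InnerProductSpace ℂ H] [CompleteSpace H]

/-- The terms of the Dyson series: `T₀(t) = e^{-itH₀}` and
`T_j(t) = ∫_0^t e^{-i(t-s)H₀} V T_{j-1}(s) ds`. -/
noncomputable def DysonT (H0 V : H →L[ℂ] H) : ℕ → ℝ → (H →L[ℂ] H)
  | 0, t => NormedSpace.exp ((-(Complex.I * t)) • H0)
  | (j + 1), t =>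
      ∫ s in (0 : ℝ)..t,
        NormedSpace.exp ((-(Complex.I * ((t : ℂ) - s))) • H0) * V * DysonT H0 V j s

section IntervalIntegral

variable {A : Type*} [NormedRing A] [NormedSpace ℝ A] [IsScalarTower ℝ A A] [SMulCommClass ℝ A A]
  [CompleteSpace A]
  {f : ℝ → A} {a b : ℝ}

theorem integral_const_mul_of_intervalIntegrable (hf : IntervalIntegrable f volume a b) (c : A) :
    ∫ x in a..b, c * f x = c * ∫ x in a..b, f x :=
  (ContinuousLinearMap.mul ℝ A c).intervalIntegral_comp_comm hf

theorem integral_mul_const_of_intervalIntegrable (hf : IntervalIntegrable f volume a b) (c : A) :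
    ∫ x in a..b, f x * c = (∫ x in a..b, f x) * c :=
  ((ContinuousLinearMap.mul ℝ A).flip c).intervalIntegral_comp_comm hf

end IntervalIntegral

section Propagator

variable {A : Type*} [NormedRing A] [NormedAlgebra ℂ A] [CompleteSpace A]

noncomputable def propagator (x : A) (z : ℂ) : A :=
  NormedSpace.exp ((-(Complex.I * z)) • x)

theorem propagator_add (x : A) (z w : ℂ) :
    propagator x (z + w) = propagator x z * propagator x w := by
  let +nondep : NormedAlgebra ℚ A := .restrictScalars ℚ ℂ A
  rw [propagator, mul_add, neg_add, add_smul]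
  exact NormedSpace.exp_add_of_commute (((Commute.refl x).smul_left _).smul_right _)

@[fun_prop]
theorem continuous_propagator (x : A) : Continuous (propagator x) := by
  let +nondep : NormedAlgebra ℚ A := .restrictScalars ℚ ℂ A
  unfold propagator
  fun_prop

end Propagator

section Dyson

variable (H0 V : H →L[ℂ] H)

theorem dysonT_zero (t : ℝ) : DysonT H0 V 0 t = propagator H0 t := rfl

theorem dysonT_succ (j : ℕ) (t : ℝ) :
    DysonT H0 V (j + 1) t = ∫ u in (0 : ℝ)..t, propagator H0 (t - u) * V * DysonT H0 V j u :=
  rfl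

theorem continuous_dysonT (j : ℕ) : Continuous (DysonT H0 V j) := by
  induction j with
  | zero => exact (continuous_propagator H0).comp Complex.continuous_ofReal
  | succ j ih =>
    rw [funext (dysonT_succ H0 V j)]
    exact intervalIntegral.continuous_parametric_intervalIntegral_of_continuous (by fun_prop)
      continuous_id

theorem dysonT_zero_mul_dysonT_succ (j : ℕ) (s t : ℝ) :
    DysonT H0 V 0 s * DysonT H0 V (j + 1) t =
      ∫ u in (0 : ℝ)..t, propagator H0 ((s + t : ℝ) - u) * V * DysonT H0 V j u := by
  have hT := continuous_dysonT H0 V j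
  rw [dysonT_zero, dysonT_succ, ← integral_const_mul_of_intervalIntegrable]
  · congr with u
    rw [Complex.ofReal_add, add_sub_assoc, propagator_add, mul_assoc, mul_assoc, mul_assoc]
  · exact (by fun_prop : Continuous _).intervalIntegrable _ _

theorem dysonT_succ_mul (j : ℕ) (s : ℝ) (B : H →L[ℂ] H) :
    DysonT H0 V (j + 1) s * B =
      ∫ r in (0 : ℝ)..s, propagator H0 (s - r) * V * (DysonT H0 V j r * B) := by
  have hT := continuous_dysonT H0 V j
  rw [dysonT_succ, ← integral_mul_const_of_intervalIntegrable]
  · simp only [mul_assoc]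
  · exact (by fun_prop : Continuous _).intervalIntegrable _ _

theorem dysonT_add (k : ℕ) (s t : ℝ) :
    DysonT H0 V k (s + t) =
      ∑ j ∈ range (k + 1), DysonT H0 V j s * DysonT H0 V (k - j) t := by
  induction k generalizing s with
  | zero => simp [dysonT_zero, propagator_add]
  | succ k ih =>
    set F := fun u : ℝ => propagator H0 ((s + t : ℝ) - u) * V * DysonT H0 V k u
    have hF : Continuous F := by have hT := continuous_dysonT H0 V k; fun_prop
    have h_tail : ∫ u in t..s + t, F u =
        ∑ j ∈ range (k + 1), DysonT H0 V (j + 1) s * DysonT H0 V (k - j) t := by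
      have hT (j : ℕ) := continuous_dysonT H0 V j
      simp_rw [dysonT_succ_mul]
      rw [← intervalIntegral.integral_finsetSum
        (fun j _ => (by fun_prop : Continuous _).intervalIntegrable _ _)]
      simp_rw [← mul_sum, ← ih]
      have h_shift := intervalIntegral.integral_comp_add_right F (a := 0) (b := s) t
      rw [zero_add] at h_shift
      rw [← h_shift]
      congr 1 with r
      simp only [F, Complex.ofReal_add, add_sub_add_right_eq_sub]
    calc DysonT H0 V (k + 1) (s + t) = (∫ u in (0 : ℝ)..t, F u) + ∫ u in t..s + t, F u :=
          (intervalIntegral.integral_add_adjacent_intervals (hF.intervalIntegrable _ _)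
            (hF.intervalIntegrable _ _)).symm
      _ = DysonT H0 V 0 s * DysonT H0 V (k + 1) t +
            ∑ j ∈ range (k + 1), DysonT H0 V (j + 1) s * DysonT H0 V (k - j) t := by
          rw [dysonT_zero_mul_dysonT_succ, h_tail]
      _ = _ := by
          rw [sum_range_succ' _ (k + 1), add_comm]
          simp only [Nat.add_sub_add_right, Nat.sub_zero]

end Dyson

theorem stmt_7_general (H0 V : H →L[ℂ] H) (s t : ℝ) (k : ℕ) :
    DysonT H0 V k (s + t) = ∑ j ∈ Finset.range (k + 1), DysonT H0 V j s * DysonT H0 V (k - j) t :=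
  dysonT_add H0 V k s t

/-- Decomposition formula for the Dyson series terms:
`T_k(s+t) = ∑_{j=0}^k T_j(s) T_{k-j}(t)`. -/
theorem stmt_7 (H0 V : H →L[ℂ] H) (hH0 : IsSelfAdjoint H0) (hV : IsSelfAdjoint V)
    (s t : ℝ) (hs : 0 ≤ s) (ht : 0 ≤ t) (k : ℕ) :
    DysonT H0 V k (s + t) = ∑ j ∈ Finset.range (k + 1), DysonT H0 V j s * DysonT H0 V (k - j) t :=
  stmt_7_general H0 V s t k
end
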